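/- Let ℋ be a complex Hilbert space, H a bounded non-negative self-adjoint operator on ℋ, 𝔥 ⊆ ℋ a closed subspace with orthogonal projection P onto 𝔥, and K the compression of H to 𝔥. Let φ : [0,∞) → ℂ be a continuous admissible function and suppose there exist α > 0 and C_α ≥ 0 such that |(1 − φ(x))/x − i| ≤ C_α x^α for all x > 0. Then for every t₀ > 0, ‖(P φ((t/n)H) P)^n − exp(−itK)‖_{B(𝔥)} → 0 as n → ∞, uniformly in t ∈ [0, t₀]. -/

import Mathlib

open Filter Topology

set_option maxHeartbeats 1000000
set_option synthInstance.maxHeartbeats 400000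

lemma zeno_aux_pow_sub_pow {A : Type*} [NormedRing A] (h1 : ‖(1 : A)‖ ≤ 1)
    (a b : A) (ha : ‖a‖ ≤ 1) (hb : ‖b‖ ≤ 1) (n : ℕ) :
    ‖a ^ n - b ^ n‖ ≤ n * ‖a - b‖ := by
  have hbn : ∀ m : ℕ, ‖b ^ m‖ ≤ 1 := by
    intro m
    induction m with
    | zero => simpa using h1
    | succ m ih =>
      calc ‖b ^ (m + 1)‖ = ‖b * b ^ m‖ := by rw [pow_succ']
        _ ≤ ‖b‖ * ‖b ^ m‖ := norm_mul_le _ _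
        _ ≤ 1 := by nlinarith [norm_nonneg b, norm_nonneg (b ^ m)]
  induction n with
  | zero => simp
  | succ n ih =>
    have hsplit : a ^ (n + 1) - b ^ (n + 1) = a * (a ^ n - b ^ n) + (a - b) * b ^ n := by
      rw [pow_succ', pow_succ']; noncomm_ring
    calc ‖a ^ (n + 1) - b ^ (n + 1)‖
        ≤ ‖a * (a ^ n - b ^ n)‖ + ‖(a - b) * b ^ n‖ := by rw [hsplit]; exact norm_add_le _ _
      _ ≤ ‖a‖ * ‖a ^ n - b ^ n‖ + ‖a - b‖ * ‖b ^ n‖ := by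
          gcongr <;> exact norm_mul_le _ _
      _ ≤ 1 * (n * ‖a - b‖) + ‖a - b‖ * 1 := by
          have h₁ : ‖a‖ * ‖a ^ n - b ^ n‖ ≤ 1 * (n * ‖a - b‖) :=
            mul_le_mul ha ih (norm_nonneg _) one_pos.le
          have h₂ : ‖a - b‖ * ‖b ^ n‖ ≤ ‖a - b‖ * 1 :=
            mul_le_mul_of_nonneg_left (hbn n) (norm_nonneg _)
          linarith
      _ = (n + 1 : ℕ) * ‖a - b‖ := by push_cast; ring

lemma zeno_aux_exp_remainder {A : Type*} [NormedRing A] [NormedAlgebra ℂ A] [CompleteSpace A]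
    (a : A) : ‖NormedSpace.exp a - 1 - a‖ ≤ ‖a‖ ^ 2 * Real.exp ‖a‖ := by
  have hsum : Summable fun n : ℕ => ((Nat.factorial n : ℂ))⁻¹ • a ^ n := NormedSpace.expSeries_summable' a
  have hsumn : Summable fun n : ℕ => ‖((Nat.factorial n : ℂ))⁻¹ • a ^ n‖ :=
    NormedSpace.norm_expSeries_summable' a
  have hkey : NormedSpace.exp a - 1 - a = ∑' n : ℕ, ((Nat.factorial (n + 2) : ℂ))⁻¹ • a ^ (n + 2) := by
    rw [NormedSpace.exp_eq_tsum ℂ]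
    beta_reduce
    rw [← Summable.sum_add_tsum_nat_add 2 hsum]
    simp [Finset.sum_range_succ, Nat.factorial]
    abel
  have hb : ∀ n : ℕ, ‖((Nat.factorial (n + 2) : ℂ))⁻¹ • a ^ (n + 2)‖ ≤ ‖a‖ ^ 2 * (‖a‖ ^ n / Nat.factorial n) := by
    intro n
    have h1 : ‖((Nat.factorial (n + 2) : ℂ))⁻¹ • a ^ (n + 2)‖ ≤ ((Nat.factorial (n + 2) : ℝ))⁻¹ * ‖a‖ ^ (n + 2) := by
      rw [norm_smul]
      gcongr
      · simp
      · exact norm_pow_le' a (by omega)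
    refine h1.trans ?_
    have h2 : ((Nat.factorial (n + 2) : ℝ))⁻¹ ≤ ((Nat.factorial n : ℝ))⁻¹ := by
      have := Nat.factorial_le (show n ≤ n + 2 by omega)
      have h0 : (0:ℝ) < (Nat.factorial n : ℝ) := by exact_mod_cast Nat.factorial_pos n
      exact inv_anti₀ h0 (by exact_mod_cast this)
    calc ((Nat.factorial (n + 2) : ℝ))⁻¹ * ‖a‖ ^ (n + 2) ≤ ((Nat.factorial n : ℝ))⁻¹ * ‖a‖ ^ (n + 2) := by
          gcongr
      _ = ‖a‖ ^ 2 * (‖a‖ ^ n / Nat.factorial n) := by rw [pow_add]; ring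
  have hsum2 : Summable fun n : ℕ => ‖((Nat.factorial (n + 2) : ℂ))⁻¹ • a ^ (n + 2)‖ :=
    (summable_nat_add_iff 2).2 hsumn
  have hsum3 : Summable fun n : ℕ => ‖a‖ ^ 2 * (‖a‖ ^ n / Nat.factorial n) :=
    (Real.summable_pow_div_factorial ‖a‖).mul_left _
  calc ‖NormedSpace.exp a - 1 - a‖ = ‖∑' n : ℕ, ((Nat.factorial (n + 2) : ℂ))⁻¹ • a ^ (n + 2)‖ := by
        rw [hkey]
    _ ≤ ∑' n : ℕ, ‖((Nat.factorial (n + 2) : ℂ))⁻¹ • a ^ (n + 2)‖ := norm_tsum_le_tsum_norm hsum2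
    _ ≤ ∑' n : ℕ, ‖a‖ ^ 2 * (‖a‖ ^ n / Nat.factorial n) := Summable.tsum_le_tsum hb hsum2 hsum3
    _ = ‖a‖ ^ 2 * Real.exp ‖a‖ := by
        rw [tsum_mul_left, Real.exp_eq_exp_ℝ, NormedSpace.exp_eq_tsum_div]

/-- **Corollary 3.2(ii)** (bounded case). The closed subspace `𝔥 ⊆ ℋ` is modelled by a
Hilbert space `𝔥` with a linear isometric embedding `J : 𝔥 → ℋ`; `P = J*` is the
orthogonal projection onto `𝔥`, characterized by `⟪P g, f⟫ = ⟪g, J f⟫`. For a bounded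
non-negative self-adjoint `H`, compression `K = P H J`, and a continuous admissible `φ`
satisfying `|(1 - φ(x))/x - i| ≤ C x^α` for all `x > 0` (some `α > 0`, `C ≥ 0`), one has
`(P φ((t/n)H) P)ⁿ → exp(-itK)` in operator norm as `n → ∞`, uniformly in
`t ∈ [0, t₀]`. -/
theorem zeno_product_formula_norm_convergence_hoelder
    {ℋ : Type*} [NormedAddCommGroup ℋ] [InnerProductSpace ℂ ℋ] [CompleteSpace ℋ]
    {𝔥 : Type*} [NormedAddCommGroup 𝔥] [InnerProductSpace ℂ 𝔥] [CompleteSpace 𝔥]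
    (J : 𝔥 →ₗᵢ[ℂ] ℋ) (P : ℋ →L[ℂ] 𝔥)
    (hP : ∀ (g : ℋ) (f : 𝔥), (inner ℂ (P g) f : ℂ) = inner ℂ g (J f))
    (Hop : ℋ →L[ℂ] ℋ) (hsa : IsSelfAdjoint Hop)
    (hpos : ∀ g : ℋ, 0 ≤ (inner ℂ (Hop g) g : ℂ).re)
    (K : 𝔥 →L[ℂ] 𝔥) (hK : ∀ f : 𝔥, K f = P (Hop (J f)))
    (φ : ℝ → ℂ) (hφc : Continuous φ)
    (hφb : ∀ x : ℝ, 0 ≤ x → ‖φ x‖ ≤ 1) (hφ0 : φ 0 = 1)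
    (hφd : Tendsto (fun x : ℝ => (φ x - 1) / (x : ℂ)) (𝓝[>] 0) (𝓝 (-Complex.I)))
    (α C : ℝ) (hα : 0 < α) (hC : 0 ≤ C)
    (hest : ∀ x : ℝ, 0 < x → ‖(1 - φ x) / (x : ℂ) - Complex.I‖ ≤ C * x ^ α)
    (F : ℝ → (𝔥 →L[ℂ] 𝔥))
    (hF : ∀ (τ : ℝ) (f : 𝔥),
      F τ f = P (cfc (fun z : ℂ => φ (τ * z.re)) Hop (J f))) :
    ∀ t₀ : ℝ, 0 < t₀ →
      TendstoUniformlyOn (fun (n : ℕ) (t : ℝ) => (F (t / n)) ^ n)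
        (fun t : ℝ => NormedSpace.exp ((-(Complex.I * (t : ℂ))) • K))
        atTop (Set.Icc 0 t₀) := by
  intro t₀ ht₀
  have hnormal : IsStarNormal Hop := hsa.isStarNormal
  have hsym := ContinuousLinearMap.isSelfAdjoint_iff_isSymmetric.mp hsa
  -- `P ∘ J = id`
  have hPJ : ∀ f : 𝔥, P (J f) = f := by
    intro f
    refine ext_inner_right ℂ fun g => ?_
    rw [hP, LinearIsometry.inner_map_map]
  -- the "other side" of `hP`
  have hP' : ∀ (h : ℋ) (f : 𝔥), (inner ℂ f (P h) : ℂ) = inner ℂ (J f) h := by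
    intro h f
    rw [← inner_conj_symm, hP, inner_conj_symm]
  -- `P` is a contraction
  have hPnorm : ∀ g : ℋ, ‖P g‖ ≤ ‖g‖ := by
    intro g
    rcases eq_or_ne (P g) 0 with h0 | h0
    · simp [h0]
    · have hpg : 0 < ‖P g‖ := norm_pos_iff.mpr h0
      have h2 : ‖P g‖ * ‖P g‖ ≤ ‖g‖ * ‖P g‖ := by
        have e1 : ((inner ℂ (P g) (P g) : ℂ)).re = ‖P g‖ * ‖P g‖ := by
          simpa using @inner_self_eq_norm_mul_norm ℂ 𝔥 _ _ _ (P g)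
        calc ‖P g‖ * ‖P g‖ = ((inner ℂ (P g) (P g) : ℂ)).re := e1.symm
          _ = ((inner ℂ g (J (P g)) : ℂ)).re := by rw [hP]
          _ ≤ ‖(inner ℂ g (J (P g)) : ℂ)‖ := Complex.re_le_norm _
          _ = ‖(inner ℂ g (J (P g)) : ℂ)‖ := rfl
          _ ≤ ‖g‖ * ‖J (P g)‖ := norm_inner_le_norm _ _
          _ = ‖g‖ * ‖P g‖ := by rw [J.norm_map]
      exact le_of_mul_le_mul_right h2 hpg
  -- `K` is self-adjoint
  have hKsa : IsSelfAdjoint K := by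
    rw [ContinuousLinearMap.isSelfAdjoint_iff_isSymmetric]
    intro f g
    show (inner ℂ (K f) g : ℂ) = inner ℂ f (K g)
    rw [hK f, hK g, hP, hP']
    exact hsym (J f) (J g)
  -- spectral facts
  have hres : SpectrumRestricts Hop Complex.reCLM := hsa.spectrumRestricts
  have hposop : Hop.IsPositive := by
    refine ⟨hsym, fun x => ?_⟩
    simpa [ContinuousLinearMap.reApplyInnerSelf] using hpos x
  have hnn : ∀ x ∈ spectrum ℝ Hop, 0 ≤ x :=
    SpectrumRestricts.nnreal_iff.mp hposop.spectrumRestricts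
  have hspec : ∀ z ∈ spectrum ℂ Hop, ∃ x : ℝ, 0 ≤ x ∧ x ≤ ‖Hop‖ ∧ z = (x : ℂ) := by
    intro z hz
    refine ⟨z.re, hnn _ (hres.apply_mem hz), ?_, ?_⟩
    · rcases subsingleton_or_nontrivial ℋ with hsub | hnt
      · exact absurd hz (by simp [spectrum.mem_iff, isUnit_of_subsingleton])
      · calc z.re ≤ |z.re| := le_abs_self _
          _ ≤ ‖z‖ := Complex.abs_re_le_norm z
          _ = ‖z‖ := rfl
          _ ≤ ‖Hop‖ := spectrum.norm_le_norm_of_mem hz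
    · have h1 : (algebraMap ℝ ℂ) (Complex.reCLM z) = z := hres.rightInvOn hz
      simpa using h1.symm
  -- affine functions under cfc
  have haffine : ∀ c : ℂ, cfc (fun z : ℂ => 1 - c * z) Hop = 1 - c • Hop := by
    intro c
    have h1 : cfc (fun z : ℂ => (fun _ : ℂ => (1 : ℂ)) z - (fun z : ℂ => c * z) z) Hop
        = cfc (fun _ : ℂ => (1 : ℂ)) Hop - cfc (fun z : ℂ => c * z) Hop :=
      cfc_sub _ _ Hop continuousOn_const ((continuous_const.mul continuous_id).continuousOn)
    calc cfc (fun z : ℂ => 1 - c * z) Hop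
        = cfc (fun _ : ℂ => (1 : ℂ)) Hop - cfc (fun z : ℂ => c * z) Hop := h1
      _ = 1 - c • Hop := by
          rw [cfc_const 1 Hop, map_one (algebraMap ℂ (ℋ →L[ℂ] ℋ)), cfc_const_mul_id c Hop]
  -- continuity of the symbols
  have hgc : ∀ τ : ℝ, Continuous fun z : ℂ => φ (τ * z.re) :=
    fun τ => hφc.comp (continuous_const.mul Complex.continuous_re)
  -- norm bound 1 for `cfc`
  have hcfc_norm : ∀ τ : ℝ, 0 ≤ τ → ‖cfc (fun z : ℂ => φ (τ * z.re)) Hop‖ ≤ 1 := by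
    intro τ hτ
    refine norm_cfc_le zero_le_one fun z hz => ?_
    obtain ⟨x, hx0, -, rfl⟩ := hspec z hz
    simpa using hφb (τ * x) (mul_nonneg hτ hx0)
  -- quantitative estimate for `cfc`
  have hcfc_diff : ∀ τ : ℝ, 0 ≤ τ →
      ‖cfc (fun z : ℂ => φ (τ * z.re)) Hop - (1 - (Complex.I * τ) • Hop)‖
        ≤ C * (τ * ‖Hop‖) ^ (1 + α) := by
    intro τ hτ
    have hsub := cfc_sub (fun z : ℂ => φ (τ * z.re))
      (fun z : ℂ => 1 - (Complex.I * τ) * z) Hop ((hgc τ).continuousOn)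
      ((continuous_const.sub (continuous_const.mul continuous_id)).continuousOn)
    rw [haffine (Complex.I * τ)] at hsub
    rw [← hsub]
    refine norm_cfc_le (by positivity) fun z hz => ?_
    obtain ⟨x, hx0, hxb, rfl⟩ := hspec z hz
    have hs0 : 0 ≤ τ * x := mul_nonneg hτ hx0
    have hsb : τ * x ≤ τ * ‖Hop‖ := mul_le_mul_of_nonneg_left hxb hτ
    have harg : φ (τ * ((x : ℂ)).re) - (1 - Complex.I * (τ : ℂ) * (x : ℂ))
        = φ (τ * x) - (1 - Complex.I * ((τ * x : ℝ) : ℂ)) := by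
      simp only [Complex.ofReal_re]
      push_cast
      ring_nf
    rw [harg]
    rcases eq_or_lt_of_le hs0 with h0 | hspos
    · rw [← h0]
      simp [hφ0]
      positivity
    · have hmain := hest (τ * x) hspos
      have hsne : ((τ * x : ℝ) : ℂ) ≠ 0 := by
        exact_mod_cast ne_of_gt hspos
      have hfac : φ (τ * x) - (1 - Complex.I * ((τ * x : ℝ) : ℂ))
          = -(((τ * x : ℝ) : ℂ) * ((1 - φ (τ * x)) / ((τ * x : ℝ) : ℂ) - Complex.I)) := by
        have hmul : ((τ * x : ℝ) : ℂ) * ((1 - φ (τ * x)) / ((τ * x : ℝ) : ℂ) - Complex.I)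
            = (1 - φ (τ * x)) - Complex.I * ((τ * x : ℝ) : ℂ) := by
          rw [mul_sub, mul_div_cancel₀ _ hsne]
          ring
        rw [hmul]
        ring
      rw [hfac, norm_neg, norm_mul]
      have hns : ‖((τ * x : ℝ) : ℂ)‖ = τ * x := by
        rw [Complex.norm_real, Real.norm_eq_abs, abs_of_pos hspos]
      rw [hns]
      calc (τ * x) * ‖(1 - φ (τ * x)) / ((τ * x : ℝ) : ℂ) - Complex.I‖
          ≤ (τ * x) * (C * (τ * x) ^ α) := mul_le_mul_of_nonneg_left hmain hs0
        _ = C * (τ * x) ^ (1 + α) := by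
            rw [Real.rpow_add hspos, Real.rpow_one]; ring
        _ ≤ C * (τ * ‖Hop‖) ^ (1 + α) := by
            exact mul_le_mul_of_nonneg_left
              (Real.rpow_le_rpow hs0 hsb (by positivity)) hC
  -- norm bound for `F`
  have hFnorm : ∀ τ : ℝ, 0 ≤ τ → ‖F τ‖ ≤ 1 := by
    intro τ hτ
    refine ContinuousLinearMap.opNorm_le_bound _ zero_le_one fun f => ?_
    rw [hF]
    calc ‖P (cfc (fun z : ℂ => φ (τ * z.re)) Hop (J f))‖
        ≤ ‖cfc (fun z : ℂ => φ (τ * z.re)) Hop (J f)‖ := hPnorm _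
      _ ≤ ‖cfc (fun z : ℂ => φ (τ * z.re)) Hop‖ * ‖J f‖ :=
          ContinuousLinearMap.le_opNorm _ _
      _ ≤ 1 * ‖f‖ := by
          rw [J.norm_map]
          exact mul_le_mul_of_nonneg_right (hcfc_norm τ hτ) (norm_nonneg f)
  -- quantitative estimate for `F`
  have hFdiff : ∀ τ : ℝ, 0 ≤ τ →
      ‖F τ - (1 - (Complex.I * τ) • K)‖ ≤ C * (τ * ‖Hop‖) ^ (1 + α) := by
    intro τ hτ
    refine ContinuousLinearMap.opNorm_le_bound _ (by positivity) fun f => ?_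
    have hrepr : (F τ - (1 - (Complex.I * τ) • K)) f
        = P ((cfc (fun z : ℂ => φ (τ * z.re)) Hop - (1 - (Complex.I * τ) • Hop)) (J f)) := by
      simp only [ContinuousLinearMap.sub_apply, ContinuousLinearMap.smul_apply,
        ContinuousLinearMap.one_apply, map_sub, map_smul, hF, hK, hPJ]
    rw [hrepr]
    calc ‖P ((cfc (fun z : ℂ => φ (τ * z.re)) Hop - (1 - (Complex.I * τ) • Hop)) (J f))‖
        ≤ ‖(cfc (fun z : ℂ => φ (τ * z.re)) Hop - (1 - (Complex.I * τ) • Hop)) (J f)‖ :=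
          hPnorm _
      _ ≤ ‖cfc (fun z : ℂ => φ (τ * z.re)) Hop - (1 - (Complex.I * τ) • Hop)‖ * ‖J f‖ :=
          ContinuousLinearMap.le_opNorm _ _
      _ ≤ C * (τ * ‖Hop‖) ^ (1 + α) * ‖f‖ := by
          rw [J.norm_map]
          exact mul_le_mul_of_nonneg_right (hcfc_diff τ hτ) (norm_nonneg f)
  -- the exponential is a contraction
  have hexp_norm : ∀ τ : ℝ, ‖NormedSpace.exp ((-(Complex.I * τ)) • K)‖ ≤ 1 := by
    intro τ
    have hskew : (-(Complex.I * τ)) • K ∈ skewAdjoint (𝔥 →L[ℂ] 𝔥) := by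
      rw [skewAdjoint.mem_iff, star_smul, hKsa.star_eq]
      simp [Complex.star_def, map_mul, Complex.conj_ofReal, Complex.conj_I, neg_smul]
    let +nondep : NormedAlgebra ℚ (𝔥 →L[ℂ] 𝔥) := NormedAlgebra.restrictScalars ℚ ℂ _
    have hu := NormedSpace.exp_mem_unitary_of_mem_skewAdjoint hskew
    set u := NormedSpace.exp ((-(Complex.I * τ)) • K) with hudef
    have h1 : star u * u = 1 := (Unitary.mem_iff.mp hu).1
    have h3 : ‖(1 : 𝔥 →L[ℂ] 𝔥)‖ ≤ 1 := by
      rw [ContinuousLinearMap.one_def]; exact ContinuousLinearMap.norm_id_le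
    have h2 : ‖u‖ * ‖u‖ ≤ 1 := by
      rw [← CStarRing.norm_star_mul_self, h1]; exact h3
    nlinarith [norm_nonneg u]
  -- exponential remainder estimate
  have hexp_diff : ∀ τ : ℝ, 0 ≤ τ → τ ≤ t₀ →
      ‖NormedSpace.exp ((-(Complex.I * τ)) • K) - (1 - (Complex.I * τ) • K)‖
        ≤ (τ * ‖K‖) ^ 2 * Real.exp (t₀ * ‖K‖) := by
    intro τ hτ hτ'
    have hna : ‖(-(Complex.I * τ)) • K‖ = τ * ‖K‖ := by
      rw [norm_smul]
      simp [abs_of_nonneg hτ]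
    have h1 : (1 : 𝔥 →L[ℂ] 𝔥) - (Complex.I * τ) • K = 1 + (-(Complex.I * τ)) • K := by
      rw [neg_smul, sub_eq_add_neg]
    rw [h1]
    have heq : NormedSpace.exp ((-(Complex.I * τ)) • K) - (1 + (-(Complex.I * τ)) • K)
        = NormedSpace.exp ((-(Complex.I * τ)) • K) - 1 - (-(Complex.I * τ)) • K := by
      abel
    rw [heq]
    refine (zeno_aux_exp_remainder _).trans ?_
    rw [hna]
    have hKn : τ * ‖K‖ ≤ t₀ * ‖K‖ := mul_le_mul_of_nonneg_right hτ' (norm_nonneg K)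
    exact mul_le_mul_of_nonneg_left (Real.exp_le_exp.mpr hKn) (by positivity)
  -- combined one-step estimate
  have hdiff : ∀ τ : ℝ, 0 ≤ τ → τ ≤ t₀ →
      ‖F τ - NormedSpace.exp ((-(Complex.I * τ)) • K)‖
        ≤ C * (τ * ‖Hop‖) ^ (1 + α) + (τ * ‖K‖) ^ 2 * Real.exp (t₀ * ‖K‖) := by
    intro τ hτ hτ'
    have hsplit : F τ - NormedSpace.exp ((-(Complex.I * τ)) • K)
        = (F τ - (1 - (Complex.I * τ) • K))
          + ((1 - (Complex.I * τ) • K) - NormedSpace.exp ((-(Complex.I * τ)) • K)) := by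
      abel
    rw [hsplit]
    refine (norm_add_le _ _).trans (add_le_add (hFdiff τ hτ) ?_)
    rw [norm_sub_rev]
    exact hexp_diff τ hτ hτ'
  -- main convergence argument
  rw [Metric.tendstoUniformlyOn_iff]
  intro ε hε
  set c₁ := C * (t₀ * ‖Hop‖) ^ (1 + α) with hc₁def
  set c₂ := (t₀ * ‖K‖) ^ 2 * Real.exp (t₀ * ‖K‖) with hc₂def
  have hb : Tendsto (fun n : ℕ => c₁ / (n : ℝ) ^ α + c₂ / n) atTop (𝓝 0) := by
    have h1 : Tendsto (fun n : ℕ => ((n : ℝ) ^ α)) atTop atTop :=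
      (tendsto_rpow_atTop hα).comp tendsto_natCast_atTop_atTop
    have h2 : Tendsto (fun n : ℕ => c₁ / (n : ℝ) ^ α) atTop (𝓝 0) := by
      simpa [div_eq_mul_inv] using h1.inv_tendsto_atTop.const_mul c₁
    have h3 : Tendsto (fun n : ℕ => c₂ / (n : ℝ)) atTop (𝓝 0) :=
      tendsto_const_div_atTop_nhds_zero_nat c₂
    simpa using h2.add h3
  filter_upwards [hb.eventually_lt_const hε, eventually_ge_atTop 1] with n hn hn1
  intro t ht
  obtain ⟨ht0, htt⟩ := ht
  have hnR : (0 : ℝ) < n := by exact_mod_cast hn1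
  have hτ0 : 0 ≤ t / (n : ℝ) := div_nonneg ht0 hnR.le
  have hτle : t / (n : ℝ) ≤ t₀ / (n : ℝ) := by gcongr
  have hτt₀ : t / (n : ℝ) ≤ t₀ := hτle.trans (div_le_self ht₀.le (by exact_mod_cast hn1))
  rw [dist_eq_norm, norm_sub_rev]
  have hne : ((n : ℂ)) ≠ 0 := Nat.cast_ne_zero.mpr (by omega)
  have hpow : NormedSpace.exp ((-(Complex.I * (t : ℂ))) • K)
      = (NormedSpace.exp ((-(Complex.I * ((t / (n : ℝ) : ℝ) : ℂ))) • K)) ^ n := by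
    let +nondep : NormedAlgebra ℚ (𝔥 →L[ℂ] 𝔥) := NormedAlgebra.restrictScalars ℚ ℂ _
    rw [← NormedSpace.exp_nsmul]
    congr 1
    rw [← Nat.cast_smul_eq_nsmul ℂ, smul_smul]
    congr 1
    push_cast
    field_simp
  have h1le : ‖(1 : 𝔥 →L[ℂ] 𝔥)‖ ≤ 1 := by
    rw [ContinuousLinearMap.one_def]; exact ContinuousLinearMap.norm_id_le
  have hX : 0 ≤ t₀ * ‖Hop‖ := by positivity
  have hnα : (0 : ℝ) < (n : ℝ) ^ α := Real.rpow_pos_of_pos hnR α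
  have harith1 : (n : ℝ) * (C * ((t₀ * ‖Hop‖) / n) ^ (1 + α)) = c₁ / (n : ℝ) ^ α := by
    rw [Real.div_rpow hX hnR.le, Real.rpow_add hnR, Real.rpow_one, hc₁def]
    field_simp
  have harith2 : (n : ℝ) * (((t₀ * ‖K‖) / n) ^ 2 * Real.exp (t₀ * ‖K‖)) = c₂ / n := by
    rw [div_pow, hc₂def]
    field_simp
  have hmain : ‖(F (t / (n : ℝ))) ^ n - NormedSpace.exp ((-(Complex.I * (t : ℂ))) • K)‖
      ≤ c₁ / (n : ℝ) ^ α + c₂ / n := by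
    rw [hpow]
    calc ‖(F (t / (n : ℝ))) ^ n
          - (NormedSpace.exp ((-(Complex.I * ((t / (n : ℝ) : ℝ) : ℂ))) • K)) ^ n‖
        ≤ n * ‖F (t / (n : ℝ))
            - NormedSpace.exp ((-(Complex.I * ((t / (n : ℝ) : ℝ) : ℂ))) • K)‖ :=
          zeno_aux_pow_sub_pow h1le _ _ (hFnorm _ hτ0) (hexp_norm _) n
      _ ≤ n * (C * ((t / (n : ℝ)) * ‖Hop‖) ^ (1 + α)
            + ((t / (n : ℝ)) * ‖K‖) ^ 2 * Real.exp (t₀ * ‖K‖)) :=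
          mul_le_mul_of_nonneg_left (hdiff _ hτ0 hτt₀) (Nat.cast_nonneg n)
      _ ≤ n * (C * ((t₀ * ‖Hop‖) / n) ^ (1 + α)
            + ((t₀ * ‖K‖) / n) ^ 2 * Real.exp (t₀ * ‖K‖)) := by
          have e1 : (t / (n : ℝ)) * ‖Hop‖ ≤ (t₀ * ‖Hop‖) / n := by
            rw [div_mul_eq_mul_div]
            gcongr
          have e2 : (t / (n : ℝ)) * ‖K‖ ≤ (t₀ * ‖K‖) / n := by
            rw [div_mul_eq_mul_div]
            gcongr
          have e1' : C * ((t / (n : ℝ)) * ‖Hop‖) ^ (1 + α)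
              ≤ C * ((t₀ * ‖Hop‖) / n) ^ (1 + α) :=
            mul_le_mul_of_nonneg_left
              (Real.rpow_le_rpow (by positivity) e1 (by positivity)) hC
          have e2' : ((t / (n : ℝ)) * ‖K‖) ^ 2 * Real.exp (t₀ * ‖K‖)
              ≤ ((t₀ * ‖K‖) / n) ^ 2 * Real.exp (t₀ * ‖K‖) := by
            have h2 : ((t / (n : ℝ)) * ‖K‖) ^ 2 ≤ ((t₀ * ‖K‖) / n) ^ 2 := by
              have : 0 ≤ (t / (n : ℝ)) * ‖K‖ := by positivity
              nlinarith
            exact mul_le_mul_of_nonneg_right h2 (Real.exp_pos _).le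
          exact mul_le_mul_of_nonneg_left (add_le_add e1' e2') (Nat.cast_nonneg n)
      _ = c₁ / (n : ℝ) ^ α + c₂ / n := by rw [mul_add, harith1, harith2]
  exact lt_of_le_of_lt hmain hn
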